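/- If n ≥ 3 and K : ℝⁿ → ℝ is a bounded C² function with bounded first and second derivatives, then for every ξ ∈ ℝⁿ the pure second partial derivative of Γ in μ satisfies ∂²_{μμ}Γ(0, ξ) = c₁ ΔK(ξ), where c₁ = (1/(n(p+1))) ∫_{ℝⁿ} |y|² z₀(y)^{p+1} dy and ΔK denotes the Laplacian of K. -/

import Mathlib

/-!
Both derivatives in `μ` can be taken under the integral sign: along the ray `s ↦ s y + ξ` the
integrand and its first derivative are dominated by `C |y|^k z₀(y)^{p+1}` with `k ≤ 2`, and
`z₀^{p+1} = α^{p+1} (1 + |y|²)^{-n}` makes these integrable precisely because `n ≥ 3`. This gives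
`∂²_{μμ}Γ(0, ξ) = (1/(p+1)) ∫ D²K(ξ)[y, y] z₀(y)^{p+1} dy`. As `z₀` is radial, flipping the sign of
one coordinate kills the mixed moments `∫ yᵢ yⱼ z₀^{p+1}` (`i ≠ j`), and swapping two coordinates
shows that the pure moments `∫ yᵢ² z₀^{p+1}` coincide, so each is `1/n` of `∫ |y|² z₀^{p+1}`:
only the trace of the Hessian survives.
-/

open MeasureTheory

noncomputable def z0 (n : ℕ) (γ α : ℝ) (y : EuclideanSpace ℝ (Fin n)) : ℝ :=
  α * (1 + ‖y‖ ^ 2) ^ (-(((n : ℝ) - 2 * γ) / 2))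

noncomputable def Gam (n : ℕ) (γ α p : ℝ) (K : EuclideanSpace ℝ (Fin n) → ℝ)
    (μ : ℝ) (ξ : EuclideanSpace ℝ (Fin n)) : ℝ :=
  (1 / (p + 1)) * ∫ y, K (μ • y + ξ) * z0 n γ α y ^ (p + 1)

section Differentiation

variable {E F : Type*} [NormedAddCommGroup E] [NormedSpace ℝ E] [MeasurableSpace E]
  [OpensMeasurableSpace E] [NormedAddCommGroup F] [NormedSpace ℝ F] {μ : Measure E}

-- Stated for a family of functionals `ℓ y` so that it covers both `K` (with `ℓ y = id`) and
-- `x ↦ DK(x) y` (with `ℓ y` the evaluation at `y`).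
theorem hasDerivAt_integral_clm_apply_comp_smul_add {g : E → F} (hg : ContDiff ℝ 1 g) {C : ℝ}
    (hg' : ∀ x, ‖fderiv ℝ g x‖ ≤ C) {ℓ : E → F →L[ℝ] ℝ} (hℓ : Continuous ℓ) {k : ℕ}
    (hℓk : ∀ y, ‖ℓ y‖ ≤ ‖y‖ ^ k) {W : E → ℝ} (hW : AEStronglyMeasurable W μ)
    (hdom : Integrable (fun y => ‖y‖ ^ (k + 1) * W y) μ) (ξ : E) (t : ℝ)
    (hint : Integrable (fun y => ℓ y (g (t • y + ξ)) * W y) μ) :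
    HasDerivAt (fun s => ∫ y, ℓ y (g (s • y + ξ)) * W y ∂μ)
      (∫ y, ℓ y (fderiv ℝ g (t • y + ξ) y) * W y ∂μ) t := by
  have hray : ∀ s : ℝ, Continuous fun y : E => s • y + ξ := fun s => by fun_prop
  refine (hasDerivAt_integral_of_dominated_loc_of_deriv_le (s := Set.univ)
    (F' := fun s y => ℓ y (fderiv ℝ g (s • y + ξ) y) * W y)
    (bound := fun y => C * ‖‖y‖ ^ (k + 1) * W y‖) Filter.univ_mem
    (Filter.Eventually.of_forall fun s =>
      (hℓ.clm_apply (hg.continuous.comp (hray s))).aestronglyMeasurable.mul hW)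
    hint (((hℓ.clm_apply (((hg.continuous_fderiv one_ne_zero).comp (hray t)).clm_apply
      continuous_id))).aestronglyMeasurable.mul hW)
    (Filter.Eventually.of_forall fun y s _ => ?_) (hdom.norm.const_mul C)
    (Filter.Eventually.of_forall fun y s _ => ?_)).2
  · have hgy : ‖fderiv ℝ g (s • y + ξ) y‖ ≤ C * ‖y‖ :=
      ((fderiv ℝ g _).le_opNorm y).trans (by gcongr; exact hg' _)
    calc ‖ℓ y (fderiv ℝ g (s • y + ξ) y) * W y‖
        ≤ ‖y‖ ^ k * (C * ‖y‖) * ‖W y‖ := by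
          rw [norm_mul]; gcongr
          exact ((ℓ y).le_opNorm _).trans (mul_le_mul (hℓk y) hgy (norm_nonneg _) (by positivity))
      _ = C * ‖‖y‖ ^ (k + 1) * W y‖ := by
          simp only [norm_mul, norm_pow, norm_norm]; ring
  · have hsy : HasDerivAt (fun s : ℝ => s • y + ξ) y s := by
      simpa using ((hasDerivAt_id s).smul_const y).add_const ξ
    exact ((ℓ y).hasFDerivAt.comp_hasDerivAt s
      ((hg.differentiable one_ne_zero _).hasFDerivAt.comp_hasDerivAt s hsy)).mul_const (W y)

variable {K : E → ℝ} {W : E → ℝ}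

theorem hasDerivAt_integral_comp_smul_add (hK : ContDiff ℝ 1 K) {C₀ C₁ : ℝ}
    (hK₀ : ∀ x, |K x| ≤ C₀) (hK₁ : ∀ x, ‖fderiv ℝ K x‖ ≤ C₁) (hW : Integrable W μ)
    (hW₁ : Integrable (fun y => ‖y‖ * W y) μ) (ξ : E) (t : ℝ) :
    HasDerivAt (fun s => ∫ y, K (s • y + ξ) * W y ∂μ)
      (∫ y, fderiv ℝ K (t • y + ξ) y * W y ∂μ) t := by
  have hint : Integrable (fun y => K (t • y + ξ) * W y) μ :=
    (hW.norm.const_mul C₀).mono' ((hK.continuous.comp (by fun_prop)).aestronglyMeasurable.mul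
      hW.1) (Filter.Eventually.of_forall fun y => by rw [norm_mul]; gcongr; exact hK₀ _)
  exact hasDerivAt_integral_clm_apply_comp_smul_add (ℓ := fun _ => ContinuousLinearMap.id ℝ ℝ)
    hK hK₁ continuous_const (k := 0) (fun _ => by simp)
    hW.1 (by simpa using hW₁) ξ t hint

theorem hasDerivAt_integral_fderiv_comp_smul_add (hK : ContDiff ℝ 2 K) {C₁ C₂ : ℝ}
    (hK₁ : ∀ x, ‖fderiv ℝ K x‖ ≤ C₁) (hK₂ : ∀ x, ‖fderiv ℝ (fderiv ℝ K) x‖ ≤ C₂)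
    (hW : AEStronglyMeasurable W μ) (hW₁ : Integrable (fun y => ‖y‖ * W y) μ)
    (hW₂ : Integrable (fun y => ‖y‖ ^ 2 * W y) μ) (ξ : E) (t : ℝ) :
    HasDerivAt (fun s => ∫ y, fderiv ℝ K (s • y + ξ) y * W y ∂μ)
      (∫ y, fderiv ℝ (fderiv ℝ K) (t • y + ξ) y y * W y ∂μ) t := by
  have hK' : ContDiff ℝ 1 (fderiv ℝ K) := hK.fderiv_right (m := 1) le_rfl
  have hint : Integrable (fun y => fderiv ℝ K (t • y + ξ) y * W y) μ := by
    refine (hW₁.norm.const_mul C₁).mono' (((hK'.continuous.comp (by fun_prop)).clm_apply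
      continuous_id).aestronglyMeasurable.mul hW) (Filter.Eventually.of_forall fun y => ?_)
    calc ‖fderiv ℝ K (t • y + ξ) y * W y‖ ≤ C₁ * ‖y‖ * ‖W y‖ := by
          rw [norm_mul]; gcongr
          exact ((fderiv ℝ K _).le_opNorm y).trans (by gcongr; exact hK₁ _)
      _ = C₁ * ‖‖y‖ * W y‖ := by simp only [norm_mul, norm_norm]; ring
  have hℓ : ∀ y : E, ‖(ContinuousLinearMap.apply ℝ ℝ y : (E →L[ℝ] ℝ) →L[ℝ] ℝ)‖ ≤ ‖y‖ ^ 1 :=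
    fun y => (pow_one ‖y‖).symm ▸ ContinuousLinearMap.opNorm_le_bound _ (norm_nonneg y)
      fun f => by simpa [mul_comm] using f.le_opNorm y
  exact hasDerivAt_integral_clm_apply_comp_smul_add hK' hK₂
    (ContinuousLinearMap.apply ℝ ℝ).continuous hℓ hW hW₂ ξ t hint

end Differentiation

section Integrability

variable {E : Type*} [NormedAddCommGroup E]

theorem pow_norm_le_one_add_norm_sq_rpow (x : E) (k : ℕ) :
    ‖x‖ ^ k ≤ (1 + ‖x‖ ^ 2) ^ ((k : ℝ) / 2) := by
  calc ‖x‖ ^ k = (‖x‖ ^ 2) ^ ((k : ℝ) / 2) := by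
        rw [← Real.rpow_natCast, ← Real.rpow_natCast, ← Real.rpow_mul (norm_nonneg x)]
        congr 1; push_cast; ring
    _ ≤ (1 + ‖x‖ ^ 2) ^ ((k : ℝ) / 2) := by gcongr; linarith

variable [NormedSpace ℝ E] [FiniteDimensional ℝ E] [MeasurableSpace E] [BorelSpace E]
  {μ : Measure E} [μ.IsAddHaarMeasure]

theorem integrable_pow_norm_mul_one_add_norm_sq_rpow_neg {k : ℕ} {r : ℝ}
    (hr : (Module.finrank ℝ E : ℝ) + k < r) :
    Integrable (fun x : E => ‖x‖ ^ k * (1 + ‖x‖ ^ 2) ^ (-r / 2)) μ := by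
  refine (integrable_rpow_neg_one_add_norm_sq (μ := μ) (r := r - k) (by linarith)).mono'
    (by fun_prop) (Filter.Eventually.of_forall fun x => ?_)
  have hx : 0 < 1 + ‖x‖ ^ 2 := by positivity
  calc ‖‖x‖ ^ k * (1 + ‖x‖ ^ 2) ^ (-r / 2)‖
      = ‖x‖ ^ k * (1 + ‖x‖ ^ 2) ^ (-r / 2) := Real.norm_of_nonneg (by positivity)
    _ ≤ (1 + ‖x‖ ^ 2) ^ ((k : ℝ) / 2) * (1 + ‖x‖ ^ 2) ^ (-r / 2) := by
        gcongr; exact pow_norm_le_one_add_norm_sq_rpow x k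
    _ = (1 + ‖x‖ ^ 2) ^ (-(r - k) / 2) := by rw [← Real.rpow_add hx]; ring_nf

end Integrability

section Isometry

variable {E : Type*} [NormedAddCommGroup E] [InnerProductSpace ℝ E] [FiniteDimensional ℝ E]
  [MeasurableSpace E] [BorelSpace E] {G : Type*} [NormedAddCommGroup G] [NormedSpace ℝ G]

theorem integral_comp_linearIsometryEquiv (f : E → G) (e : E ≃ₗᵢ[ℝ] E) :
    ∫ y, f (e y) = ∫ y, f y :=
  e.measurePreserving.integral_comp e.toHomeomorph.measurableEmbedding f

end Isometry

section Symmetry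

variable {ι : Type*} [Fintype ι] {W : EuclideanSpace ℝ ι → ℝ}

theorem integrable_coord_mul_coord_mul (hWm : AEStronglyMeasurable W)
    (hW₂ : Integrable fun y : EuclideanSpace ℝ ι => ‖y‖ ^ 2 * W y) (i j : ι) :
    Integrable fun y : EuclideanSpace ℝ ι => y i * y j * W y := by
  refine hW₂.norm.mono' ((by fun_prop : Continuous fun y : EuclideanSpace ℝ ι =>
    y i * y j).aestronglyMeasurable.mul hWm) (Filter.Eventually.of_forall fun y => ?_)
  rw [norm_mul, norm_mul, norm_mul, norm_pow, norm_norm, sq]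
  gcongr <;> exact PiLp.norm_apply_le y _

variable [DecidableEq ι]

theorem clm_apply_apply_eq_sum (A : EuclideanSpace ℝ ι →L[ℝ] EuclideanSpace ℝ ι →L[ℝ] ℝ)
    (y : EuclideanSpace ℝ ι) :
    A y y = ∑ i, ∑ j, y i * y j * A (EuclideanSpace.single i 1) (EuclideanSpace.single j 1) := by
  conv_lhs => rw [← (EuclideanSpace.basisFun ι ℝ).sum_repr y]
  simp only [map_sum, map_smul, _root_.sum_apply, _root_.smul_apply,
    EuclideanSpace.basisFun_repr, EuclideanSpace.basisFun_apply, smul_eq_mul, Finset.mul_sum]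
  rw [Finset.sum_comm]
  simp only [mul_assoc, mul_left_comm]

theorem integral_coord_mul_coord_mul_eq_zero
    (hW : ∀ (e : EuclideanSpace ℝ ι ≃ₗᵢ[ℝ] EuclideanSpace ℝ ι) y, W (e y) = W y)
    {i j : ι} (hij : i ≠ j) :
    ∫ y : EuclideanSpace ℝ ι, y i * y j * W y = 0 := by
  let e : EuclideanSpace ℝ ι ≃ₗᵢ[ℝ] EuclideanSpace ℝ ι :=
    .piLpCongrRight 2 fun k => if k = i then .neg ℝ else .refl ℝ ℝ
  have he : ∀ y, e y i * e y j * W (e y) = -(y i * y j * W y) := fun y => by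
    rw [hW]; simp [e, LinearIsometryEquiv.piLpCongrRight_apply, hij.symm]
  have hflip := integral_comp_linearIsometryEquiv (fun y => y i * y j * W y) e
  simp only [he, integral_neg] at hflip
  linarith

theorem integral_coord_mul_self_mul_eq
    (hW : ∀ (e : EuclideanSpace ℝ ι ≃ₗᵢ[ℝ] EuclideanSpace ℝ ι) y, W (e y) = W y)
    (i j : ι) :
    ∫ y : EuclideanSpace ℝ ι, y i * y i * W y
      = ∫ y : EuclideanSpace ℝ ι, y j * y j * W y := by
  let e : EuclideanSpace ℝ ι ≃ₗᵢ[ℝ] EuclideanSpace ℝ ι :=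
    LinearIsometryEquiv.piLpCongrLeft 2 ℝ ℝ (Equiv.swap i j)
  have he : ∀ y, e y i * e y i * W (e y) = y j * y j * W y := fun y => by
    rw [hW]; simp [e, LinearIsometryEquiv.piLpCongrLeft_apply, Equiv.piCongrLeft'_apply]
  rw [← integral_comp_linearIsometryEquiv _ e]
  simp only [he]

theorem integral_coord_mul_self_mul
    (hW : ∀ (e : EuclideanSpace ℝ ι ≃ₗᵢ[ℝ] EuclideanSpace ℝ ι) y, W (e y) = W y)
    (hWm : AEStronglyMeasurable W)
    (hW₂ : Integrable fun y : EuclideanSpace ℝ ι => ‖y‖ ^ 2 * W y) (i : ι) :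
    ∫ y : EuclideanSpace ℝ ι, y i * y i * W y
      = (1 / Fintype.card ι) * ∫ y : EuclideanSpace ℝ ι, ‖y‖ ^ 2 * W y := by
  have : Nonempty ι := ⟨i⟩
  have hι : (Fintype.card ι : ℝ) ≠ 0 := Nat.cast_ne_zero.2 Fintype.card_ne_zero
  have hsum : ∫ y : EuclideanSpace ℝ ι, ‖y‖ ^ 2 * W y
      = ∑ j : ι, ∫ y : EuclideanSpace ℝ ι, y j * y j * W y := by
    rw [← integral_finsetSum _ fun j _ => integrable_coord_mul_coord_mul hWm hW₂ j j]
    congr 1 with y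
    rw [EuclideanSpace.real_norm_sq_eq, Finset.sum_mul]
    simp only [sq]
  rw [hsum, Finset.sum_congr rfl fun j _ => integral_coord_mul_self_mul_eq hW j i]
  simp [hι]

theorem integral_clm_apply_apply_mul
    (hW : ∀ (e : EuclideanSpace ℝ ι ≃ₗᵢ[ℝ] EuclideanSpace ℝ ι) y, W (e y) = W y)
    (hWm : AEStronglyMeasurable W)
    (hW₂ : Integrable fun y : EuclideanSpace ℝ ι => ‖y‖ ^ 2 * W y)
    (A : EuclideanSpace ℝ ι →L[ℝ] EuclideanSpace ℝ ι →L[ℝ] ℝ) :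
    ∫ y, A y y * W y = (1 / Fintype.card ι) * (∫ y, ‖y‖ ^ 2 * W y) *
      ∑ i, A (EuclideanSpace.single i 1) (EuclideanSpace.single i 1) := by
  have hint := integrable_coord_mul_coord_mul hWm hW₂
  calc ∫ y, A y y * W y
      = ∫ y, ∑ i, ∑ j, y i * y j * W y *
          A (EuclideanSpace.single i 1) (EuclideanSpace.single j 1) := by
        congr 1 with y
        simp only [clm_apply_apply_eq_sum, Finset.sum_mul, mul_right_comm _ (W y)]
    _ = ∑ i, ∑ j, (∫ y, y i * y j * W y) *
          A (EuclideanSpace.single i 1) (EuclideanSpace.single j 1) := by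
        rw [integral_finsetSum _ fun i _ =>
          integrable_finsetSum _ fun j _ => (hint i j).mul_const _]
        congr 1 with i
        rw [integral_finsetSum _ fun j _ => (hint i j).mul_const _]
        simp only [integral_mul_const]
    _ = ∑ i, (1 / Fintype.card ι) * (∫ y, ‖y‖ ^ 2 * W y) *
          A (EuclideanSpace.single i 1) (EuclideanSpace.single i 1) := by
        congr 1 with i
        rw [Finset.sum_eq_single i (fun j _ hji => by
          rw [integral_coord_mul_coord_mul_eq_zero hW hji.symm, zero_mul]) (by simp),
          integral_coord_mul_self_mul hW hWm hW₂]
    _ = _ := (Finset.mul_sum ..).symm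

end Symmetry

section Weight

variable {n : ℕ} {γ α p : ℝ}

theorem z0_rpow_eq (hα : 0 ≤ α) (hγ : (n : ℝ) - 2 * γ ≠ 0)
    (hp : p = ((n : ℝ) + 2 * γ) / ((n : ℝ) - 2 * γ)) (y : EuclideanSpace ℝ (Fin n)) :
    z0 n γ α y ^ (p + 1) = α ^ (p + 1) * (1 + ‖y‖ ^ 2) ^ (-(2 * n : ℝ) / 2) := by
  have hexp : -(((n : ℝ) - 2 * γ) / 2) * (p + 1) = -(2 * n : ℝ) / 2 := by
    rw [hp]; field_simp; ring
  rw [z0, Real.mul_rpow hα (by positivity), ← Real.rpow_mul (by positivity), hexp]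

theorem integrable_pow_norm_mul_z0_rpow (hn : 3 ≤ n) (hα : 0 ≤ α) (hγ : (n : ℝ) - 2 * γ ≠ 0)
    (hp : p = ((n : ℝ) + 2 * γ) / ((n : ℝ) - 2 * γ)) {k : ℕ} (hk : k ≤ 2) :
    Integrable fun y : EuclideanSpace ℝ (Fin n) => ‖y‖ ^ k * z0 n γ α y ^ (p + 1) := by
  have hr : (Module.finrank ℝ (EuclideanSpace ℝ (Fin n)) : ℝ) + k < 2 * n := by
    rw [finrank_euclideanSpace_fin]
    have : (k : ℝ) + 3 ≤ 2 + n := by exact_mod_cast Nat.add_le_add hk hn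
    linarith
  simp_rw [z0_rpow_eq hα hγ hp, mul_left_comm _ (α ^ (p + 1))]
  exact (integrable_pow_norm_mul_one_add_norm_sq_rpow_neg hr).const_mul _

theorem z0_map_linearIsometryEquiv
    (e : EuclideanSpace ℝ (Fin n) ≃ₗᵢ[ℝ] EuclideanSpace ℝ (Fin n)) (y : EuclideanSpace ℝ (Fin n)) :
    z0 n γ α (e y) = z0 n γ α y := by
  simp [z0]

end Weight

theorem stmt8_general (n : ℕ) (hn : 3 ≤ n) (γ : ℝ) (hγn : γ < (n : ℝ) / 2)
    (p : ℝ) (hp : p = ((n : ℝ) + 2 * γ) / ((n : ℝ) - 2 * γ))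
    (α : ℝ) (hα : 0 < α)
    (K : EuclideanSpace ℝ (Fin n) → ℝ) (hK : ContDiff ℝ 2 K)
    (hKb : ∃ C, ∀ x, |K x| ≤ C)
    (hK1b : ∃ C, ∀ x, ‖fderiv ℝ K x‖ ≤ C)
    (hK2b : ∃ C, ∀ x, ‖fderiv ℝ (fderiv ℝ K) x‖ ≤ C)
    (ξ : EuclideanSpace ℝ (Fin n)) :
    deriv (fun t => deriv (fun s => Gam n γ α p K s ξ) t) 0 =
      ((1 / ((n : ℝ) * (p + 1))) * ∫ y, ‖y‖ ^ 2 * z0 n γ α y ^ (p + 1)) *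
        ∑ i : Fin n, fderiv ℝ (fderiv ℝ K) ξ (EuclideanSpace.single i (1 : ℝ))
          (EuclideanSpace.single i (1 : ℝ)) := by
  obtain ⟨C₀, hK₀⟩ := hKb
  obtain ⟨C₁, hK₁⟩ := hK1b
  obtain ⟨C₂, hK₂⟩ := hK2b
  have hW := fun k (hk : k ≤ 2) =>
    integrable_pow_norm_mul_z0_rpow hn hα.le (by linarith : (n : ℝ) - 2 * γ ≠ 0) hp hk
  have hW₀ : Integrable fun y => z0 n γ α y ^ (p + 1) := by simpa using hW 0 (by norm_num)
  have hW₁ : Integrable fun y => ‖y‖ * z0 n γ α y ^ (p + 1) := by simpa using hW 1 (by norm_num)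
  have hderiv : deriv (fun s => Gam n γ α p K s ξ) =
      fun t => 1 / (p + 1) * ∫ y, fderiv ℝ K (t • y + ξ) y * z0 n γ α y ^ (p + 1) :=
    funext fun t => ((hasDerivAt_integral_comp_smul_add (hK.of_le one_le_two) hK₀ hK₁ hW₀ hW₁
      ξ t).const_mul _).deriv
  rw [hderiv, ((hasDerivAt_integral_fderiv_comp_smul_add hK hK₁ hK₂ hW₀.1 hW₁ (hW 2 le_rfl)
    ξ 0).const_mul _).deriv]
  simp only [zero_smul, zero_add]
  rw [integral_clm_apply_apply_mul (fun e y => by rw [z0_map_linearIsometryEquiv]) hW₀.1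
    (hW 2 le_rfl), Fintype.card_fin, ← one_div_mul_one_div_rev]
  ring

/-- `∂²_{μμ}Γ(0, ξ) = c₁ ΔK(ξ)`, where the Laplacian of `K` is the trace of its
Hessian, `ΔK(ξ) = ∑ᵢ ∂²K/∂ξᵢ²(ξ)`. -/
theorem stmt8 (n : ℕ) (hn : 3 ≤ n) (γ : ℝ) (hγ : 0 < γ) (hγn : γ < (n : ℝ) / 2)
    (p : ℝ) (hp : p = ((n : ℝ) + 2 * γ) / ((n : ℝ) - 2 * γ))
    (α : ℝ) (hα : 0 < α)
    (K : EuclideanSpace ℝ (Fin n) → ℝ) (hK : ContDiff ℝ 2 K)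
    (hKb : ∃ C, ∀ x, |K x| ≤ C)
    (hK1b : ∃ C, ∀ x, ‖fderiv ℝ K x‖ ≤ C)
    (hK2b : ∃ C, ∀ x, ‖fderiv ℝ (fderiv ℝ K) x‖ ≤ C)
    (ξ : EuclideanSpace ℝ (Fin n)) :
    deriv (fun t => deriv (fun s => Gam n γ α p K s ξ) t) 0 =
      ((1 / ((n : ℝ) * (p + 1))) * ∫ y, ‖y‖ ^ 2 * z0 n γ α y ^ (p + 1)) *
        ∑ i : Fin n, fderiv ℝ (fderiv ℝ K) ξ (EuclideanSpace.single i (1 : ℝ))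
          (EuclideanSpace.single i (1 : ℝ)) :=
  stmt8_general n hn γ hγn p hp α hα K hK hKb hK1b hK2b ξ
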